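/- Caristi's fixed point theorem under 𝒯_c: Let (E,‖·‖) be a 𝒯_c-complete RN module over ℝ with base (Ω,𝓕,P) such that E has the countable concatenation property, and φ : E → L̄⁰(𝓕) a proper function which is 𝒯_c-lower semicontinuous, bounded from below, and has the local property. If T : E → E is a mapping such that φ(Tu) + ‖Tu − u‖ ≤ φ(u) for all u ∈ E, then T has a fixed point. -/

import Mathlib

open MeasureTheory ENNReal Set Filter

namespace GYY

variable {Ω : Type*} [MeasurableSpace Ω]

/-- `L⁰(𝓕)`: equivalence classes of real-valued random variables on `(Ω,𝓕,P)`. -/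
abbrev L0 (P : Measure Ω) := Ω →ₘ[P] ℝ

/-- `L̄⁰(𝓕)`: equivalence classes of extended-real-valued random variables. -/
abbrev L0e (P : Measure Ω) := Ω →ₘ[P] EReal

/-- `L⁰₊₊(𝓕)`: the (classes of) random variables that are strictly positive a.s. -/
def L0pp (P : Measure Ω) : Set (L0 P) := {ε | ∀ᵐ ω ∂P, 0 < ε ω}

/-- The equivalence class `Ĩ_A` of the indicator function of a measurable set `A`. -/
noncomputable def indL0 (P : Measure Ω) (A : Set Ω) (hA : MeasurableSet A) : L0 P :=
  AEEqFun.mk (A.indicator fun _ => (1 : ℝ)) (aestronglyMeasurable_const.indicator hA)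

/-- A random metric space (RM space) with base `(Ω,𝓕,P)`. -/
structure RMSpace (P : Measure Ω) (E : Type*) where
  d : E → E → L0 P
  d_nonneg : ∀ p q, ∀ᵐ ω ∂P, 0 ≤ d p q ω
  d_eq_zero_iff : ∀ p q, d p q = 0 ↔ p = q
  d_symm : ∀ p q, d p q = d q p
  d_triangle : ∀ p q r, ∀ᵐ ω ∂P, d p r ω ≤ d p q ω + d q r ω

/-- Convergence in probability `P` of a sequence in `L⁰(𝓕)`, i.e. convergence in the
`(ε,λ)`-topology of `L⁰(𝓕)` with the random metric `d(p,q) = |p - q|`. -/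
def TendstoProb (P : Measure Ω) (r : ℕ → L0 P) (s : L0 P) : Prop :=
  ∀ ε : ℝ, 0 < ε → ∀ lam ∈ Ioo (0 : ℝ) 1, ∃ N : ℕ, ∀ n ≥ N,
    ENNReal.ofReal (1 - lam) < P {ω | |r n ω - s ω| < ε}

namespace RMSpace

variable {P : Measure Ω} {E : Type*} (M : RMSpace P E)

/-- Convergence of a sequence in the `(ε,λ)`-topology of an RM space. -/
def TendstoEL (x : ℕ → E) (a : E) : Prop :=
  ∀ ε : ℝ, 0 < ε → ∀ lam ∈ Ioo (0 : ℝ) 1, ∃ N : ℕ, ∀ n ≥ N,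
    ENNReal.ofReal (1 - lam) < P {ω | M.d (x n) a ω < ε}

/-- Cauchy sequence for the `d_{ε,λ}`-uniformity of an RM space. -/
def CauchySeqEL (x : ℕ → E) : Prop :=
  ∀ ε : ℝ, 0 < ε → ∀ lam ∈ Ioo (0 : ℝ) 1, ∃ N : ℕ, ∀ m ≥ N, ∀ n ≥ N,
    ENNReal.ofReal (1 - lam) < P {ω | M.d (x m) (x n) ω < ε}

/-- `d_{ε,λ}`-completeness of an RM space (the `d_{ε,λ}`-uniformity is metrizable, hence
completeness is equivalent to sequential completeness). -/
def CompleteEL : Prop := ∀ x : ℕ → E, M.CauchySeqEL x → ∃ a, M.TendstoEL x a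

/-- `φ : E → L̄⁰(𝓕)` is `𝒯_{ε,λ}`-lower semicontinuous: its epigraph
`epi(φ) = {(x,r) ∈ E × L⁰ : φ(x) ≤ r}` is closed in
`(E,𝒯_{ε,λ}) × (L⁰(𝓕),𝒯_{ε,λ})` (sequentially; both topologies are metrizable). -/
def LscEL (φ : E → L0e P) : Prop :=
  ∀ (x : ℕ → E) (r : ℕ → L0 P) (a : E) (s : L0 P),
    (∀ n, ∀ᵐ ω ∂P, φ (x n) ω ≤ (r n ω : EReal)) →
    M.TendstoEL x a → TendstoProb P r s →
    ∀ᵐ ω ∂P, φ a ω ≤ (s ω : EReal)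

end RMSpace

/-- `φ` is proper on `G`: `φ(x) > -∞` a.s. for every `x ∈ G`, and `φ(x) < +∞` a.s.
for some `x ∈ G`. -/
def ProperOn {E : Type*} {P : Measure Ω} (φ : E → L0e P) (G : Set E) : Prop :=
  (∀ x ∈ G, ∀ᵐ ω ∂P, ⊥ < φ x ω) ∧ ∃ x ∈ G, ∀ᵐ ω ∂P, φ x ω < ⊤

/-- `φ` is bounded from below on `G` by an element of `L⁰(𝓕)`. -/
def BddBelowOn {E : Type*} {P : Measure Ω} (φ : E → L0e P) (G : Set E) : Prop :=
  ∃ ξ : L0 P, ∀ x ∈ G, ∀ᵐ ω ∂P, (ξ ω : EReal) ≤ φ x ω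

/-- `φ` is bounded from above on `G` by an element of `L⁰(𝓕)`. -/
def BddAboveOn {E : Type*} {P : Measure Ω} (φ : E → L0e P) (G : Set E) : Prop :=
  ∃ ξ : L0 P, ∀ x ∈ G, ∀ᵐ ω ∂P, φ x ω ≤ (ξ ω : EReal)

/-- `η = ⋀ φ(G)`, the infimum of `φ(G)` in the complete lattice `L̄⁰(𝓕)`. -/
def IsInfOn {E : Type*} {P : Measure Ω} (φ : E → L0e P) (G : Set E) (η : L0e P) : Prop :=
  (∀ x ∈ G, ∀ᵐ ω ∂P, η ω ≤ φ x ω) ∧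
    ∀ ζ : L0e P, (∀ x ∈ G, ∀ᵐ ω ∂P, ζ ω ≤ φ x ω) → ∀ᵐ ω ∂P, ζ ω ≤ η ω

/-- `η = ⋁ φ(G)`, the supremum of `φ(G)` in the complete lattice `L̄⁰(𝓕)`. -/
def IsSupOn {E : Type*} {P : Measure Ω} (φ : E → L0e P) (G : Set E) (η : L0e P) : Prop :=
  (∀ x ∈ G, ∀ᵐ ω ∂P, φ x ω ≤ η ω) ∧
    ∀ ζ : L0e P, (∀ x ∈ G, ∀ᵐ ω ∂P, φ x ω ≤ ζ ω) → ∀ᵐ ω ∂P, η ω ≤ ζ ω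

/-- `s = ⋁ g(G)` for an `L⁰(𝓕)`-valued function `g`. -/
def IsSupOnR {E : Type*} {P : Measure Ω} (g : E → L0 P) (G : Set E) (s : L0 P) : Prop :=
  (∀ x ∈ G, ∀ᵐ ω ∂P, g x ω ≤ s ω) ∧
    ∀ c : L0 P, (∀ x ∈ G, ∀ᵐ ω ∂P, g x ω ≤ c ω) → ∀ᵐ ω ∂P, s ω ≤ c ω

/-- The Cauchy property (for the `d_{ε,λ}`-uniformity of `L⁰(𝓕)`, i.e. the uniformity of
convergence in probability) of the net `{φ(m) : m ∈ M}` indexed by `M` directed by the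
order of `X`. -/
def CauchyNetProb {X : Type*} [Preorder X] {P : Measure Ω} (φ : X → L0e P) (M : Set X) : Prop :=
  ∀ ε : ℝ, 0 < ε → ∀ lam ∈ Ioo (0 : ℝ) 1, ∃ m₀ ∈ M, ∀ m₁ ∈ M, ∀ m₂ ∈ M,
    m₀ ≤ m₁ → m₀ ≤ m₂ →
      ENNReal.ofReal (1 - lam) < P {ω | |(φ m₁ ω).toReal - (φ m₂ ω).toReal| < ε}

/-- The section filter of the net `{x_g : g ∈ G}`, `x_g = g`, indexed by `G` directed by the
order of `X`; the net is Cauchy iff this filter is a Cauchy filter. -/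
def netFilter {X : Type*} [Preorder X] (G : Set X) : Filter X :=
  ⨅ g ∈ G, 𝓟 {y | y ∈ G ∧ g ≤ y}

/-- A random normed module (RN module) over `ℝ` with base `(Ω,𝓕,P)`: a left module `E`
over the algebra `L⁰(𝓕)` together with an `L⁰`-norm. -/
structure RNModule (P : Measure Ω) (E : Type*) [AddCommGroup E] where
  smul : L0 P → E → E
  one_smul : ∀ x, smul 1 x = x
  mul_smul : ∀ ξ η x, smul (ξ * η) x = smul ξ (smul η x)
  smul_add : ∀ ξ x y, smul ξ (x + y) = smul ξ x + smul ξ y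
  add_smul : ∀ ξ η x, smul (ξ + η) x = smul ξ x + smul η x
  nm : E → L0 P
  nm_nonneg : ∀ x, ∀ᵐ ω ∂P, 0 ≤ nm x ω
  nm_eq_zero_iff : ∀ x, nm x = 0 ↔ x = 0
  nm_smul : ∀ ξ x, ∀ᵐ ω ∂P, nm (smul ξ x) ω = |ξ ω| * nm x ω
  nm_add_le : ∀ x y, ∀ᵐ ω ∂P, nm (x + y) ω ≤ nm x ω + nm y ω

/-- The `𝒯_c`-neighbourhood filter of a point `r` of `L⁰(𝓕)`, with base the closed balls
`{s : |s - r| ≤ ε}`, `ε ∈ L⁰₊₊`. -/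
def cNhdsL0 (P : Measure Ω) (r : L0 P) : Filter (L0 P) :=
  ⨅ ε ∈ L0pp P, 𝓟 {s | ∀ᵐ ω ∂P, |s ω - r ω| ≤ ε ω}

namespace RNModule

variable {P : Measure Ω} {E : Type*} [AddCommGroup E] (N : RNModule P E)

/-- Convergence of sequences in the `(ε,λ)`-topology `𝒯_{ε,λ}` of an RN module. -/
def TendstoEL (x : ℕ → E) (a : E) : Prop :=
  ∀ ε : ℝ, 0 < ε → ∀ lam ∈ Ioo (0 : ℝ) 1, ∃ N' : ℕ, ∀ n ≥ N',
    ENNReal.ofReal (1 - lam) < P {ω | N.nm (x n - a) ω < ε}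

/-- Cauchy sequence for the `d_{ε,λ}`-uniformity of an RN module. -/
def CauchySeqEL (x : ℕ → E) : Prop :=
  ∀ ε : ℝ, 0 < ε → ∀ lam ∈ Ioo (0 : ℝ) 1, ∃ N' : ℕ, ∀ m ≥ N', ∀ n ≥ N',
    ENNReal.ofReal (1 - lam) < P {ω | N.nm (x m - x n) ω < ε}

/-- `𝒯_{ε,λ}`-completeness (the `d_{ε,λ}`-uniformity is metrizable, hence completeness is
equivalent to sequential completeness). -/
def CompleteEL : Prop := ∀ x : ℕ → E, N.CauchySeqEL x → ∃ a, N.TendstoEL x a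

/-- `G` is `𝒯_{ε,λ}`-closed (sequentially; `𝒯_{ε,λ}` is metrizable). -/
def ClosedEL (G : Set E) : Prop :=
  ∀ (x : ℕ → E) (a : E), (∀ n, x n ∈ G) → N.TendstoEL x a → a ∈ G

/-- `φ : G → L̄⁰(𝓕)` is `𝒯_{ε,λ}`-lower semicontinuous on `G`: its epigraph
`{(x,r) ∈ G × L⁰ : φ(x) ≤ r}` is closed in `(G,𝒯_{ε,λ}) × (L⁰(𝓕),𝒯_{ε,λ})`. -/
def LscELOn (φ : E → L0e P) (G : Set E) : Prop :=
  ∀ (x : ℕ → E) (r : ℕ → L0 P) (a : E) (s : L0 P),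
    (∀ n, x n ∈ G) → a ∈ G →
    (∀ n, ∀ᵐ ω ∂P, φ (x n) ω ≤ (r n ω : EReal)) →
    N.TendstoEL x a → TendstoProb P r s →
    ∀ᵐ ω ∂P, φ a ω ≤ (s ω : EReal)

/-- The neighbourhood filter of `x` in the locally `L⁰`-convex topology `𝒯_c`,
whose base consists of the closed balls `{y : ‖y - x‖ ≤ ε}`, `ε ∈ L⁰₊₊`. -/
def cNhds (x : E) : Filter E :=
  ⨅ ε ∈ L0pp P, 𝓟 {y | ∀ᵐ ω ∂P, N.nm (y - x) ω ≤ ε ω}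

/-- The `d_c`-uniformity of an RN module, with base `{U(ε) : ε ∈ L⁰₊₊}`,
`U(ε) = {(p,q) : ‖p - q‖ ≤ ε}`. -/
def cUniformity : Filter (E × E) :=
  ⨅ ε ∈ L0pp P, 𝓟 {p | ∀ᵐ ω ∂P, N.nm (p.1 - p.2) ω ≤ ε ω}

/-- `𝒯_c`-completeness: every Cauchy filter for the `d_c`-uniformity converges. -/
def cComplete : Prop :=
  ∀ F : Filter E, F.NeBot → F ×ˢ F ≤ N.cUniformity → ∃ x, F ≤ N.cNhds x

/-- The `𝒯_c`-closure of a subset. -/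
def cClosure (G : Set E) : Set E := {x | (N.cNhds x ⊓ 𝓟 G).NeBot}

/-- `G` is `𝒯_c`-closed. -/
def cClosed (G : Set E) : Prop := ∀ x, x ∈ N.cClosure G → x ∈ G

/-- `S` is `𝒯_c`-dense in `T`. -/
def cDenseIn (S T : Set E) : Prop := ∀ x ∈ T, x ∈ N.cClosure S

/-- The `𝒯_c`-boundary `∂_c G`. -/
def cBoundary (G : Set E) : Set E := N.cClosure G ∩ N.cClosure Gᶜ

/-- `φ : G → L̄⁰(𝓕)` is `𝒯_c`-lower semicontinuous on `G`: its epigraph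
`{(x,r) ∈ G × L⁰ : φ(x) ≤ r}` is closed in `(G,𝒯_c) × (L⁰(𝓕),𝒯_c)`. -/
def cLscOn (φ : E → L0e P) (G : Set E) : Prop :=
  ∀ (a : E) (s : L0 P), a ∈ G →
    ((N.cNhds a ×ˢ cNhdsL0 P s) ⊓
      𝓟 {p : E × L0 P | p.1 ∈ G ∧ ∀ᵐ ω ∂P, φ p.1 ω ≤ (p.2 ω : EReal)}).NeBot →
    ∀ᵐ ω ∂P, φ a ω ≤ (s ω : EReal)

/-- The countable concatenation property of a subset `G` of an RN module. -/
def HasCC (G : Set E) : Prop :=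
  ∀ (x : ℕ → E), (∀ n, x n ∈ G) →
    ∀ (A : ℕ → Set Ω) (hA : ∀ n, MeasurableSet (A n)),
      (∀ i j, i ≠ j → Disjoint (A i) (A j)) → (⋃ n, A n) = univ →
        ∃ y ∈ G, ∀ n, N.smul (indL0 P (A n) (hA n)) y = N.smul (indL0 P (A n) (hA n)) (x n)

/-- The countable concatenation property of a subset of the product `L⁰(𝓕)`-module
`E × L⁰(𝓕)` (with componentwise module operations). -/
def HasCCProd (G : Set (E × L0 P)) : Prop :=
  ∀ (p : ℕ → E × L0 P), (∀ n, p n ∈ G) →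
    ∀ (A : ℕ → Set Ω) (hA : ∀ n, MeasurableSet (A n)),
      (∀ i j, i ≠ j → Disjoint (A i) (A j)) → (⋃ n, A n) = univ →
        ∃ q ∈ G, ∀ n,
          N.smul (indL0 P (A n) (hA n)) q.1 = N.smul (indL0 P (A n) (hA n)) (p n).1 ∧
          indL0 P (A n) (hA n) * q.2 = indL0 P (A n) (hA n) * (p n).2

/-- The local property of an `L̄⁰(𝓕)`-valued function:
`Ĩ_A·φ(x) = Ĩ_A·φ(Ĩ_A·x)` for all `x ∈ E`, `A ∈ 𝓕`, i.e. `φ(x) = φ(Ĩ_A x)` a.s. on `A`. -/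
def LocalProp (φ : E → L0e P) : Prop :=
  ∀ (x : E) (A : Set Ω) (hA : MeasurableSet A),
    ∀ᵐ ω ∂P, ω ∈ A → φ x ω = φ (N.smul (indL0 P A hA) x) ω

/-- `G` is `L⁰(𝓕)`-convex. -/
def L0Convex (G : Set E) : Prop :=
  ∀ x ∈ G, ∀ y ∈ G, ∀ ξ η : L0 P,
    (∀ᵐ ω ∂P, 0 ≤ ξ ω) → (∀ᵐ ω ∂P, 0 ≤ η ω) → ξ + η = 1 →
      N.smul ξ x + N.smul η y ∈ G

/-- `G` is a.s. bounded: `⋁{‖p‖ : p ∈ G} ∈ L⁰₊(𝓕)`. -/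
def ASBounded (G : Set E) : Prop :=
  ∃ ξ : L0 P, ∀ p ∈ G, ∀ᵐ ω ∂P, N.nm p ω ≤ ξ ω

/-- Membership in the random conjugate space `E*`: `f` is an a.s. bounded random linear
functional, i.e. an `L⁰(𝓕)`-linear map `f : E → L⁰(𝓕)` with `|f(x)| ≤ ξ·‖x‖` for all `x`
for some `ξ ∈ L⁰₊(𝓕)`. -/
def IsDual (f : E → L0 P) : Prop :=
  (∀ x y, f (x + y) = f x + f y) ∧
  (∀ (ξ : L0 P) (x : E), f (N.smul ξ x) = ξ * f x) ∧
  ∃ ξ : L0 P, (∀ᵐ ω ∂P, 0 ≤ ξ ω) ∧ ∀ x, ∀ᵐ ω ∂P, |f x ω| ≤ ξ ω * N.nm x ω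

/-- `nf = ‖f‖* := ⋀{ξ ∈ L⁰₊ : |f(x)| ≤ ξ‖x‖ for all x ∈ E}`, the random norm of `E*`. -/
def IsDualNorm (f : E → L0 P) (nf : L0 P) : Prop :=
  (∀ ξ : L0 P, ((∀ᵐ ω ∂P, 0 ≤ ξ ω) ∧ ∀ x, ∀ᵐ ω ∂P, |f x ω| ≤ ξ ω * N.nm x ω) →
    ∀ᵐ ω ∂P, nf ω ≤ ξ ω) ∧
  (∀ c : L0 P,
    (∀ ξ : L0 P, ((∀ᵐ ω ∂P, 0 ≤ ξ ω) ∧ ∀ x, ∀ᵐ ω ∂P, |f x ω| ≤ ξ ω * N.nm x ω) →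
      ∀ᵐ ω ∂P, c ω ≤ ξ ω) → ∀ᵐ ω ∂P, c ω ≤ nf ω)

/-- The cone `K(f,k) = {y ∈ E : k‖y‖ ≤ f(y)}`. -/
def Kcone (f : E → L0 P) (k : L0 P) : Set E := {y | ∀ᵐ ω ∂P, k ω * N.nm y ω ≤ f y ω}

/-- `f ∈ E*∖{0}`, bounded from above on `G`, supports `G` at some point:
`f(x) = ⋁f(G)` for some `x ∈ G`. -/
def Supports (G : Set E) (f : E → L0 P) : Prop :=
  N.IsDual f ∧ f ≠ 0 ∧ (∃ ξ : L0 P, ∀ x ∈ G, ∀ᵐ ω ∂P, f x ω ≤ ξ ω) ∧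
    ∃ x ∈ G, IsSupOnR f G (f x)

/-- The set of support points of `G`: points `x ∈ G` at which some
`f ∈ E*∖{0}`, bounded from above on `G`, attains `f(x) = ⋁f(G)`. -/
def SupportPoints (G : Set E) : Set E :=
  {x | x ∈ G ∧ ∃ f : E → L0 P, N.IsDual f ∧ f ≠ 0 ∧
    (∃ ξ : L0 P, ∀ y ∈ G, ∀ᵐ ω ∂P, f y ω ≤ ξ ω) ∧ IsSupOnR f G (f x)}

end RNModule


/-!
A minimal point `u` of the Brøndsted order `x ≼ y :⇔ φ x + ‖x - y‖ ≤ φ y` is a fixed point of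
`T`, since `T u ≼ u`. To find one, build a chain `X (n + 1) ≼ X n` with `φ (X n)` within `2⁻ⁿ`
of the essential infimum of `φ` on `{y | y ≼ X n}`. Such near-minimisers exist because the
countable concatenation and local properties make these lower sets downward directed (glue two
points along `{φ a ≤ φ b}`), and the essential infimum of a directed family is a countable
infimum, which is again realised, up to `δ`, by a concatenation.

The chain need not be `𝒯_c`-Cauchy, as `2⁻ⁿ ≤ ε` only holds on the set where `ε` is large, but
concatenations of the `X n` along pieces of the sets `{2⁻ⁿ ≤ ε}` are pairwise `ε`-close for
every `ε ∈ L⁰₊₊`, so by `𝒯_c`-completeness they converge to some `u`. Lower semicontinuity gives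
`φ u ≤ ⋀ₙ φ (X n)`, from which `u ≼ X n` for all `n`, and any `y ≼ u` then has `‖y - u‖ ≤ 2⁻ⁿ`
for all `n`.
-/

section EssentialInfimum

open Real

variable {P : Measure Ω} [IsFiniteMeasure P]

lemma abs_arctan_le (x : ℝ) : |arctan x| ≤ π / 2 :=
  abs_le.2 ⟨(arctan_mem_Ioo x).1.le, (arctan_mem_Ioo x).2.le⟩

lemma integrable_arctan_comp {f : Ω → ℝ} (hf : Measurable f) :
    Integrable (fun ω => arctan (f ω)) P :=
  .of_bound (continuous_arctan.measurable.comp hf).aestronglyMeasurable (π / 2)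
    (ae_of_all _ fun _ => abs_arctan_le _)

lemma neg_le_integral_arctan_comp (f : Ω → ℝ) :
    -(π / 2 * P.real univ) ≤ ∫ ω, arctan (f ω) ∂P :=
  (abs_le.1 (norm_integral_le_of_norm_le_const
    (ae_of_all _ fun ω => (norm_eq_abs _).trans_le (abs_arctan_le (f ω))))).1

/-- Take `s n` with `∫ arctan ∘ f (s n)` within `1 / (n + 1)` of the infimum over `ι`. Comparing
`f (s n)` with a common lower bound of `f (s n)` and `f i` shows that the positive part of
`⨅ₙ arctan ∘ f (s n) - arctan ∘ f i` has integral at most `1 / (n + 1)`. -/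
lemma exists_seq_forall_lowerBound_le {ι : Type*} [Nonempty ι] (f : ι → Ω → ℝ)
    (hf : ∀ i, Measurable (f i)) (hdir : ∀ i j, ∃ k, ∀ᵐ ω ∂P, f k ω ≤ f i ω ∧ f k ω ≤ f j ω) :
    ∃ s : ℕ → ι, ∀ i, ∀ᵐ ω ∂P, ∀ c, (∀ n, c ≤ f (s n) ω) → c ≤ f i ω := by
  have hint := fun i => integrable_arctan_comp (P := P) (hf i)
  set J : ι → ℝ := fun i => ∫ ω, arctan (f i ω) ∂P
  have hJ : BddBelow (range J) := ⟨_, by rintro _ ⟨i, rfl⟩; exact neg_le_integral_arctan_comp _⟩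
  choose s hs using fun n : ℕ =>
    exists_lt_of_ciInf_lt (lt_add_of_pos_right (⨅ i, J i) (Nat.one_div_pos_of_nat (n := n)))
  refine ⟨s, fun i => ?_⟩
  have hbdd : ∀ ω, BddBelow (range fun n => arctan (f (s n) ω)) := fun ω =>
    ⟨-(π / 2), by rintro _ ⟨n, rfl⟩; exact (arctan_mem_Ioo _).1.le⟩
  set m : Ω → ℝ := fun ω => ⨅ n, arctan (f (s n) ω)
  set g : Ω → ℝ := fun ω => max (m ω - arctan (f i ω)) 0
  have hg_nonneg : ∀ ω, 0 ≤ g ω := fun ω => le_max_right _ _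
  have hg_int : Integrable g P := by
    have hmeas := fun j => continuous_arctan.measurable.comp (hf j)
    refine .of_bound (((Measurable.iInf fun n => hmeas (s n)).sub (hmeas i)).max
      measurable_const).aestronglyMeasurable π (ae_of_all _ fun ω => ?_)
    have := (ciInf_le (hbdd ω) 0).trans (arctan_mem_Ioo _).2.le
    have := (arctan_mem_Ioo (f i ω)).1
    rw [Real.norm_eq_abs, abs_of_nonneg (hg_nonneg ω)]
    exact max_le (by linarith) pi_pos.le
  have hg_le : ∀ n : ℕ, ∫ ω, g ω ∂P ≤ 1 / (n + 1) := by
    intro n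
    obtain ⟨k, hk⟩ := hdir (s n) i
    calc ∫ ω, g ω ∂P ≤ ∫ ω, arctan (f (s n) ω) - arctan (f k ω) ∂P := by
          refine integral_mono_ae hg_int ((hint _).sub (hint _)) ?_
          filter_upwards [hk] with ω hk
          exact max_le (sub_le_sub (ciInf_le (hbdd ω) n) (arctan_strictMono.monotone hk.2))
            (sub_nonneg.2 (arctan_strictMono.monotone hk.1))
      _ = J (s n) - J k := integral_sub (hint _) (hint _)
      _ ≤ 1 / (n + 1) := by linarith [hs n, ciInf_le hJ k]
  have hg0 : g =ᵐ[P] 0 := by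
    refine (integral_eq_zero_iff_of_nonneg hg_nonneg hg_int).1 (le_antisymm ?_
      (integral_nonneg hg_nonneg))
    exact ge_of_tendsto' tendsto_one_div_add_atTop_nhds_zero_nat hg_le
  filter_upwards [hg0] with ω hω c hc
  have hm : m ω ≤ arctan (f i ω) := sub_nonpos.1 (max_eq_right_iff.1 hω)
  exact arctan_strictMono.le_iff_le.1
    ((le_ciInf fun n => arctan_strictMono.monotone (hc n)).trans hm)

end EssentialInfimum

section L0

variable {P : Measure Ω}

lemma inf_mem_L0pp {ε ε' : L0 P} (hε : ε ∈ L0pp P) (hε' : ε' ∈ L0pp P) : ε ⊓ ε' ∈ L0pp P := by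
  filter_upwards [hε, hε', AEEqFun.coeFn_inf ε ε'] with ω hε hε' h
  rw [h]
  exact lt_min hε hε'

lemma const_mem_L0pp {c : ℝ} (hc : 0 < c) : AEEqFun.const Ω c ∈ L0pp P := by
  filter_upwards [AEEqFun.coeFn_const (μ := P) Ω c] with ω h
  rwa [h]

lemma mem_biInf_L0pp {α : Type*} {g : L0 P → Set α} (hg : Monotone g) {s : Set α} :
    s ∈ ⨅ ε ∈ L0pp P, 𝓟 (g ε) ↔ ∃ ε ∈ L0pp P, g ε ⊆ s := by
  rw [mem_biInf_of_directed]
  · simp only [mem_principal]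
  · exact fun ε hε ε' hε' => ⟨ε ⊓ ε', inf_mem_L0pp hε hε', principal_mono.2 (hg inf_le_left),
      principal_mono.2 (hg inf_le_right)⟩
  · exact ⟨_, const_mem_L0pp one_pos⟩

lemma ae_le_of_forall_ae_le_add_pow {f g : Ω → ℝ}
    (h : ∀ n : ℕ, ∀ᵐ ω ∂P, f ω ≤ g ω + (1 / 2) ^ n) : ∀ᵐ ω ∂P, f ω ≤ g ω := by
  filter_upwards [ae_all_iff.2 h] with ω h
  refine le_of_forall_pos_le_add fun δ hδ => ?_
  obtain ⟨n, hn⟩ := exists_pow_lt_of_lt_one hδ one_half_lt_one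
  linarith [h n]

lemma mem_cNhdsL0 {s : L0 P} {B : Set (L0 P)} :
    B ∈ cNhdsL0 P s ↔ ∃ ε ∈ L0pp P, {r : L0 P | ∀ᵐ ω ∂P, |r ω - s ω| ≤ ε ω} ⊆ B := by
  unfold cNhdsL0
  exact mem_biInf_L0pp fun _ _ h _ hr => by
    filter_upwards [hr, AEEqFun.coeFn_le.2 h] with ω hr h using hr.trans h

end L0

lemma BddBelowOn.ae_coe_toReal {P : Measure Ω} {E : Type*} {φ : E → L0e P}
    (hbdd : BddBelowOn φ univ) {x : E} (hx : ∀ᵐ ω ∂P, φ x ω < ⊤) :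
    ∀ᵐ ω ∂P, ((φ x ω).toReal : EReal) = φ x ω := by
  obtain ⟨ξ, hξ⟩ := hbdd
  filter_upwards [hξ x (mem_univ x), hx] with ω hξ hx
  exact EReal.coe_toReal hx.ne (ne_bot_of_le_ne_bot (EReal.coe_ne_bot _) hξ)

namespace RNModule

section Algebra

variable {P : Measure Ω} {E : Type*} [AddCommGroup E] (N : RNModule P E)

lemma smul_sub (ξ : L0 P) (x y : E) : N.smul ξ (x - y) = N.smul ξ x - N.smul ξ y :=
  (AddMonoidHom.mk' (N.smul ξ) (N.smul_add ξ)).map_sub x y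

lemma neg_one_smul (x : E) : N.smul (-1) x = -x := by
  have := (AddMonoidHom.mk' (N.smul · x) (N.add_smul · · x)).map_neg 1
  simpa [N.one_smul] using this

lemma nm_neg (x : E) : N.nm (-x) = N.nm x := by
  refine AEEqFun.ext ?_
  filter_upwards [N.neg_one_smul x ▸ N.nm_smul (-1) x, AEEqFun.coeFn_neg (1 : L0 P),
    AEEqFun.coeFn_one (β := ℝ) (μ := P)] with ω h hneg hone
  simp [h, hneg, hone]

lemma nm_sub_comm (x y : E) : N.nm (x - y) = N.nm (y - x) := by
  rw [← N.nm_neg, neg_sub]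

lemma nm_smul_indL0 {A : Set Ω} (hA : MeasurableSet A) (x : E) :
    ∀ᵐ ω ∂P, ω ∈ A → N.nm (N.smul (indL0 P A hA) x) ω = N.nm x ω := by
  filter_upwards [N.nm_smul (indL0 P A hA) x,
    AEEqFun.coeFn_mk (μ := P) (A.indicator fun _ => (1 : ℝ)) _] with ω h hind hω
  rw [h, indL0, hind, Set.indicator_of_mem hω, abs_one, one_mul]

end Algebra

variable {P : Measure Ω} {E : Type*} [AddCommGroup E] {N : RNModule P E} {φ : E → L0e P}

lemma monotone_cBall (x : E) : Monotone fun ε : L0 P => {y | ∀ᵐ ω ∂P, N.nm (y - x) ω ≤ ε ω} :=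
  fun _ _ h _ hy => by
    filter_upwards [hy, AEEqFun.coeFn_le.2 h] with ω hy h using hy.trans h

lemma mem_cNhds {x : E} {A : Set E} :
    A ∈ N.cNhds x ↔ ∃ ε ∈ L0pp P, {y | ∀ᵐ ω ∂P, N.nm (y - x) ω ≤ ε ω} ⊆ A := by
  unfold cNhds
  exact mem_biInf_L0pp (monotone_cBall x)

lemma cComplete.exists_forall_nm_sub_le (hcomp : N.cComplete) {V : L0 P → Set E}
    (hV : Monotone V) (hne : ∀ ε ∈ L0pp P, (V ε).Nonempty)
    (hsmall : ∀ ε ∈ L0pp P, ∀ z ∈ V ε, ∀ z' ∈ V ε, ∀ᵐ ω ∂P, N.nm (z - z') ω ≤ ε ω) :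
    ∃ u, ∀ ε ∈ L0pp P, ∀ z ∈ V ε, ∀ᵐ ω ∂P, N.nm (z - u) ω ≤ ε ω := by
  set F := ⨅ ε ∈ L0pp P, 𝓟 (V ε)
  have hF : F.NeBot := forall_mem_nonempty_iff_neBot.1 fun s hs => by
    obtain ⟨ε, hε, hVs⟩ := (mem_biInf_L0pp hV).1 hs
    exact (hne ε hε).mono hVs
  have hcauchy : F ×ˢ F ≤ N.cUniformity := le_iInf₂ fun ε hε => le_principal_iff.2 <| by
    have hVF : V ε ∈ F := (mem_biInf_L0pp hV).2 ⟨ε, hε, subset_rfl⟩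
    exact mem_of_superset (prod_mem_prod hVF hVF) fun p hp => hsmall ε hε _ hp.1 _ hp.2
  obtain ⟨u, hu⟩ := hcomp F hF hcauchy
  refine ⟨u, fun ε hε z hz => ae_le_of_forall_ae_le_add_pow fun n => ?_⟩
  have hc := const_mem_L0pp (P := P) (pow_pos one_half_pos n)
  obtain ⟨ε₀, hε₀, hV₀⟩ := (mem_biInf_L0pp hV).1 <|
    hu (mem_cNhds.2 ⟨_, hc, subset_rfl⟩)
  obtain ⟨z', hz'⟩ := hne _ (inf_mem_L0pp hε hε₀)
  filter_upwards [hsmall ε hε z hz z' (hV inf_le_left hz'), hV₀ (hV inf_le_right hz'),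
    N.nm_add_le (z - z') (z' - u), AEEqFun.coeFn_const (μ := P) Ω ((1 / 2 : ℝ) ^ n)]
    with ω h₁ h₂ htri hc
  rw [sub_add_sub_cancel] at htri
  rw [hc] at h₂
  exact htri.trans (add_le_add h₁ h₂)

lemma cLscOn.ae_le (hlsc : N.cLscOn φ univ) {x : E} {s : L0 P}
    (h : ∀ ε ∈ L0pp P, ∃ z, (∀ᵐ ω ∂P, N.nm (z - x) ω ≤ ε ω) ∧
      ∀ᵐ ω ∂P, φ z ω ≤ ((s ω + ε ω : ℝ) : EReal)) :
    ∀ᵐ ω ∂P, φ x ω ≤ s ω := by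
  refine hlsc x s (mem_univ x) (inf_principal_neBot_iff.2 fun U hU => ?_)
  obtain ⟨A, hA, B, hB, hAB⟩ := mem_prod_iff.1 hU
  obtain ⟨ε₁, hε₁, hA⟩ := mem_cNhds.1 hA
  obtain ⟨ε₂, hε₂, hB⟩ := mem_cNhdsL0.1 hB
  obtain ⟨z, hz, hφz⟩ := h _ (inf_mem_L0pp hε₁ hε₂)
  have hzA : z ∈ A := hA <| by
    filter_upwards [hz, AEEqFun.coeFn_inf ε₁ ε₂] with ω hz h
    exact hz.trans (h ▸ min_le_left _ _)
  have hrB : s + ε₁ ⊓ ε₂ ∈ B := hB <| show ∀ᵐ ω ∂P, _ by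
    filter_upwards [AEEqFun.coeFn_add s (ε₁ ⊓ ε₂), AEEqFun.coeFn_inf ε₁ ε₂,
      inf_mem_L0pp hε₁ hε₂] with ω hadd hinf hpos
    rw [hadd, Pi.add_apply, add_sub_cancel_left, abs_of_pos hpos, hinf]
    exact min_le_right _ _
  refine ⟨(z, s + ε₁ ⊓ ε₂), hAB (mk_mem_prod hzA hrB), mem_univ z, ?_⟩
  filter_upwards [hφz, AEEqFun.coeFn_add s (ε₁ ⊓ ε₂)] with ω hφz hadd
  rwa [hadd]

variable (N φ) in
def BrondstedLE (x y : E) : Prop :=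
  ∀ᵐ ω ∂P, φ x ω + (N.nm (x - y) ω : EReal) ≤ φ y ω

variable (N φ) in
/-- What the argument uses of a concatenation `z = ∑ₙ Ĩ_{Cₙ} yₙ`: on `C n`, `z` looks like `y n`
to `φ` and to the distance from any fixed point. -/
def IsConcat (y : ℕ → E) (C : ℕ → Set Ω) (z : E) : Prop :=
  ∀ v, ∀ᵐ ω ∂P, ∃ n, ω ∈ C n ∧ φ z ω = φ (y n) ω ∧ N.nm (z - v) ω = N.nm (y n - v) ω

lemma BrondstedLE.refl (x : E) : N.BrondstedLE φ x x := by
  filter_upwards [AEEqFun.coeFn_zero (β := ℝ) (μ := P)] with ω h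
  rw [sub_self, (N.nm_eq_zero_iff 0).2 rfl, h]
  simp

lemma BrondstedLE.phi_le {x y : E} (h : N.BrondstedLE φ x y) : ∀ᵐ ω ∂P, φ x ω ≤ φ y ω := by
  filter_upwards [h, N.nm_nonneg (x - y)] with ω h hnm
  exact le_trans (le_add_of_nonneg_right (EReal.coe_nonneg.2 hnm)) h

lemma BrondstedLE.trans {x y z : E} (hxy : N.BrondstedLE φ x y) (hyz : N.BrondstedLE φ y z) :
    N.BrondstedLE φ x z := by
  filter_upwards [hxy, hyz, N.nm_add_le (x - y) (y - z)] with ω hxy hyz htri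
  rw [sub_add_sub_cancel] at htri
  calc φ x ω + (N.nm (x - z) ω : EReal)
      ≤ φ x ω + (N.nm (x - y) ω : EReal) + (N.nm (y - z) ω : EReal) := by
        rw [add_assoc, ← EReal.coe_add]; gcongr
    _ ≤ φ z ω := (add_le_add_left hxy _).trans hyz

lemma ae_eq_of_smul_indL0_eq (hloc : N.LocalProp φ) {A : Set Ω} (hA : MeasurableSet A)
    {y z : E} (h : N.smul (indL0 P A hA) z = N.smul (indL0 P A hA) y) (v : E) :
    ∀ᵐ ω ∂P, ω ∈ A → φ z ω = φ y ω ∧ N.nm (z - v) ω = N.nm (y - v) ω := by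
  have hsub : N.smul (indL0 P A hA) (z - v) = N.smul (indL0 P A hA) (y - v) := by
    rw [N.smul_sub, N.smul_sub, h]
  filter_upwards [hloc z A hA, hloc y A hA, N.nm_smul_indL0 hA (z - v),
    N.nm_smul_indL0 hA (y - v)] with ω hz hy hz' hy' hω
  exact ⟨by rw [hz hω, hy hω, h], by rw [← hz' hω, ← hy' hω, hsub]⟩

lemma exists_isConcat (hCC : N.HasCC univ) (hloc : N.LocalProp φ) (y : ℕ → E)
    {C : ℕ → Set Ω} (hC : ∀ n, MeasurableSet (C n)) (hcov : ∀ᵐ ω ∂P, ∃ n, ω ∈ C n) :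
    ∃ z, N.IsConcat φ y C z := by
  set B := disjointed fun n => C n ∪ (⋃ k, C k)ᶜ
  have hB : ∀ n, MeasurableSet (B n) :=
    MeasurableSet.disjointed fun n => (hC n).union (MeasurableSet.iUnion hC).compl
  have hBcov : ⋃ n, B n = univ := by
    rw [iUnion_disjointed, ← iUnion_union, union_compl_self]
  obtain ⟨z, -, hz⟩ := hCC y (fun _ => mem_univ _) B hB
    (fun i j hij => disjoint_disjointed _ hij) hBcov
  refine ⟨z, fun v => ?_⟩
  filter_upwards [hcov, ae_all_iff.2 fun n => ae_eq_of_smul_indL0_eq hloc (hB n) (hz n) v]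
    with ω hω hzy
  obtain ⟨n, hn⟩ := mem_iUnion.1 (hBcov ▸ mem_univ ω : ω ∈ ⋃ n, B n)
  refine ⟨n, ?_, hzy n hn⟩
  exact (disjointed_subset _ n hn).resolve_right fun h => h (mem_iUnion.2 hω)

lemma IsConcat.mono {y : ℕ → E} {C C' : ℕ → Set Ω} {z : E}
    (hC : ∀ᵐ ω ∂P, ∀ n, ω ∈ C n → ω ∈ C' n) (hz : N.IsConcat φ y C z) :
    N.IsConcat φ y C' z := fun v => by
  filter_upwards [hz v, hC] with ω hz hCC'
  obtain ⟨n, hn, h⟩ := hz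
  exact ⟨n, hCC' n hn, h⟩

lemma IsConcat.brondstedLE {y : ℕ → E} {C : ℕ → Set Ω} {z x : E} (hz : N.IsConcat φ y C z)
    (hy : ∀ n, N.BrondstedLE φ (y n) x) : N.BrondstedLE φ z x := by
  filter_upwards [hz x, ae_all_iff.2 hy] with ω hz hy
  obtain ⟨n, -, hφ, hnm⟩ := hz
  rw [hφ, hnm]
  exact hy n

variable (N φ) in
def IsAlmostMinimal (δ : ℝ) (x : E) : Prop :=
  ∀ y, N.BrondstedLE φ y x → ∀ᵐ ω ∂P, φ x ω ≤ φ y ω + (δ : EReal)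

lemma exists_phi_le_min (hCC : N.HasCC univ) (hloc : N.LocalProp φ) (a b : E) :
    ∃ m, (∀ x, N.BrondstedLE φ a x → N.BrondstedLE φ b x → N.BrondstedLE φ m x) ∧
      ∀ᵐ ω ∂P, φ m ω ≤ φ a ω ∧ φ m ω ≤ φ b ω := by
  set y : ℕ → E := fun n => if n = 0 then a else b
  obtain ⟨m, hm⟩ := exists_isConcat hCC hloc y
    (C := fun n => {ω | φ (y n) ω ≤ φ a ω ∧ φ (y n) ω ≤ φ b ω})
    (fun n => (measurableSet_le (φ _).measurable (φ a).measurable).inter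
      (measurableSet_le (φ _).measurable (φ b).measurable))
    (ae_of_all _ fun ω => (le_total (φ a ω) (φ b ω)).elim
      (fun h => ⟨0, le_rfl, h⟩) (fun h => ⟨1, h, le_rfl⟩))
  refine ⟨m, fun x ha hb => hm.brondstedLE fun n => ?_, ?_⟩
  · by_cases hn : n = 0 <;> simp [y, hn, ha, hb]
  · filter_upwards [hm a] with ω hω
    obtain ⟨n, hn, hφ, -⟩ := hω
    rwa [hφ]

lemma exists_brondstedLE_isAlmostMinimal [IsFiniteMeasure P] (hCC : N.HasCC univ)
    (hloc : N.LocalProp φ) (hbdd : BddBelowOn φ univ) {x : E} (hx : ∀ᵐ ω ∂P, φ x ω < ⊤)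
    {δ : ℝ} (hδ : 0 < δ) : ∃ x', N.BrondstedLE φ x' x ∧ N.IsAlmostMinimal φ δ x' := by
  set S := {y // N.BrondstedLE φ y x}
  have : Nonempty S := ⟨⟨x, .refl x⟩⟩
  have hfin : ∀ y : S, ∀ᵐ ω ∂P, ((φ y ω).toReal : EReal) = φ y ω := fun y =>
    hbdd.ae_coe_toReal (by filter_upwards [y.2.phi_le, hx] with ω h hx using h.trans_lt hx)
  obtain ⟨s, hs⟩ := exists_seq_forall_lowerBound_le (P := P) (fun (y : S) ω => (φ y ω).toReal)
    (fun y => (φ y).measurable.ereal_toReal) fun i j => by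
      obtain ⟨m, hmx, hm⟩ := exists_phi_le_min hCC hloc i.1 j.1
      refine ⟨⟨m, hmx x i.2 j.2⟩, ?_⟩
      filter_upwards [hm, hfin i, hfin j, hfin ⟨m, hmx x i.2 j.2⟩] with ω hm hi hj hk
      simp only [← EReal.coe_le_coe_iff, hi, hj, hk, hm, and_self]
  obtain ⟨ξ, hξ⟩ := hbdd
  have hcov : ∀ᵐ ω ∂P, ∃ k, ∀ n, (φ (s k) ω).toReal ≤ (φ (s n) ω).toReal + δ := by
    filter_upwards [ae_all_iff.2 fun n => hξ (s n) (mem_univ _), ae_all_iff.2 fun n => hfin (s n)]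
      with ω hξ hfin
    have hbdd : BddBelow (range fun n => (φ (s n) ω).toReal) :=
      ⟨ξ ω, by rintro _ ⟨n, rfl⟩; exact EReal.coe_le_coe_iff.1 ((hfin n).symm ▸ hξ n)⟩
    obtain ⟨k, hk⟩ := exists_lt_of_ciInf_lt
      (lt_add_of_pos_right (⨅ n, (φ (s n) ω).toReal) hδ)
    exact ⟨k, fun n => hk.le.trans (add_le_add_left (ciInf_le hbdd n) δ)⟩
  obtain ⟨z, hz⟩ := exists_isConcat hCC hloc (fun n => (s n).1)
    (C := fun k => {ω | ∀ n, (φ (s k) ω).toReal ≤ (φ (s n) ω).toReal + δ})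
    (fun k => by
      simpa only [ofPred_forall] using MeasurableSet.iInter fun n => measurableSet_le
        (φ _).measurable.ereal_toReal ((φ _).measurable.ereal_toReal.add_const δ)) hcov
  have hzx : N.BrondstedLE φ z x := hz.brondstedLE fun n => (s n).2
  refine ⟨z, hzx, fun y hy => ?_⟩
  have hyx : N.BrondstedLE φ y x := hy.trans hzx
  filter_upwards [hz x, hs ⟨y, hyx⟩, hfin ⟨y, hyx⟩, ae_all_iff.2 fun n => hfin (s n)]
    with ω hω hlow hy hsn
  obtain ⟨k, hk, hφ, -⟩ := hω
  have := hlow _ fun n => sub_le_iff_le_add.2 (hk n)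
  rw [hφ, ← hsn k, ← hy, ← EReal.coe_add, EReal.coe_le_coe_iff]
  linarith

variable (N φ) in
structure IsMinimizingChain (X : ℕ → E) : Prop where
  lt_top : ∀ᵐ ω ∂P, φ (X 0) ω < ⊤
  brondstedLE_succ : ∀ n, N.BrondstedLE φ (X (n + 1)) (X n)
  isAlmostMinimal : ∀ n, N.IsAlmostMinimal φ ((1 / 2) ^ n) (X n)

lemma exists_isMinimizingChain [IsFiniteMeasure P] (hCC : N.HasCC univ) (hloc : N.LocalProp φ)
    (hbdd : BddBelowOn φ univ) {x : E} (hx : ∀ᵐ ω ∂P, φ x ω < ⊤) :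
    ∃ X, N.IsMinimizingChain φ X ∧ N.BrondstedLE φ (X 0) x := by
  set F := {x : E // ∀ᵐ ω ∂P, φ x ω < ⊤}
  choose step hstep using fun (x : F) (n : ℕ) =>
    exists_brondstedLE_isAlmostMinimal hCC hloc hbdd x.2 (pow_pos one_half_pos n)
  have hF : ∀ (x : F) n, ∀ᵐ ω ∂P, φ (step x n) ω < ⊤ := fun x n => by
    filter_upwards [(hstep x n).1.phi_le, x.2] with ω h hx using h.trans_lt hx
  set Y : ℕ → F := fun n => Nat.rec ⟨step ⟨x, hx⟩ 0, hF _ 0⟩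
    (fun n y => ⟨step y (n + 1), hF y (n + 1)⟩) n
  refine ⟨fun n => (Y n).1, ⟨(Y 0).2, fun n => (hstep (Y n) (n + 1)).1, fun n => ?_⟩,
    (hstep _ 0).1⟩
  cases n with
  | zero => exact (hstep _ 0).2
  | succ n => exact (hstep (Y n) (n + 1)).2

variable (φ) in
noncomputable def chainInf (X : ℕ → E) : L0 P :=
  AEEqFun.mk (fun ω => ⨅ n, (φ (X n) ω).toReal)
    (Measurable.iInf fun n => (φ (X n)).measurable.ereal_toReal).aestronglyMeasurable

def dyadicCover (ε : L0 P) (n : ℕ) : Set Ω := {ω | (1 / 2 : ℝ) ^ n ≤ ε ω}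

variable (N φ) in
def IsConcatLimit (X : ℕ → E) (u : E) : Prop :=
  ∀ ε ∈ L0pp P, ∀ z, N.IsConcat φ X (dyadicCover ε) z → ∀ᵐ ω ∂P, N.nm (z - u) ω ≤ ε ω

namespace IsMinimizingChain

variable {X : ℕ → E}

lemma brondstedLE_of_le (hX : N.IsMinimizingChain φ X) {n m : ℕ} (h : n ≤ m) :
    N.BrondstedLE φ (X m) (X n) := by
  induction m, h using Nat.le_induction with
  | base => exact .refl _
  | succ m _ ih => exact (hX.brondstedLE_succ m).trans ih

lemma ae_coe_toReal (hX : N.IsMinimizingChain φ X) (hbdd : BddBelowOn φ univ) :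
    ∀ᵐ ω ∂P, ∀ n, ((φ (X n) ω).toReal : EReal) = φ (X n) ω :=
  ae_all_iff.2 fun n => hbdd.ae_coe_toReal <| by
    filter_upwards [(hX.brondstedLE_of_le n.zero_le).phi_le, hX.lt_top] with ω h h0
    using h.trans_lt h0

lemma ae_toReal_bounds (hX : N.IsMinimizingChain φ X) (hbdd : BddBelowOn φ univ) :
    ∀ᵐ ω ∂P, ∀ n m, n ≤ m →
      (φ (X m) ω).toReal + N.nm (X m - X n) ω ≤ (φ (X n) ω).toReal ∧
      (φ (X n) ω).toReal ≤ (φ (X m) ω).toReal + (1 / 2) ^ n := by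
  have hle : ∀ n m, ∀ᵐ ω ∂P, n ≤ m →
      φ (X m) ω + (N.nm (X m - X n) ω : EReal) ≤ φ (X n) ω ∧
      φ (X n) ω ≤ φ (X m) ω + (((1 / 2 : ℝ) ^ n : ℝ) : EReal) := fun n m => by
    by_cases hnm : n ≤ m
    · filter_upwards [hX.brondstedLE_of_le hnm,
        hX.isAlmostMinimal n _ (hX.brondstedLE_of_le hnm)] with ω h₁ h₂ _ using ⟨h₁, h₂⟩
    · exact ae_of_all _ fun _ h => absurd h hnm
  filter_upwards [hX.ae_coe_toReal hbdd, ae_all_iff.2 fun n => ae_all_iff.2 (hle n)]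
    with ω hfin hle n m hnm
  obtain ⟨h₁, h₂⟩ := hle n m hnm
  rw [← hfin n, ← hfin m, ← EReal.coe_add, EReal.coe_le_coe_iff] at h₁ h₂
  exact ⟨h₁, h₂⟩

lemma ae_nm_sub_le_pow (hX : N.IsMinimizingChain φ X) (hbdd : BddBelowOn φ univ) :
    ∀ᵐ ω ∂P, ∀ n m, n ≤ m → N.nm (X m - X n) ω ≤ (1 / 2) ^ n := by
  filter_upwards [hX.ae_toReal_bounds hbdd] with ω h n m hnm
  linarith [h n m hnm]

lemma ae_chainInf_bounds (hX : N.IsMinimizingChain φ X) (hbdd : BddBelowOn φ univ) :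
    ∀ᵐ ω ∂P, ∀ n, chainInf φ X ω ≤ (φ (X n) ω).toReal ∧
      (φ (X n) ω).toReal ≤ chainInf φ X ω + (1 / 2) ^ n := by
  have hfin := hX.ae_coe_toReal hbdd
  have hb := hX.ae_toReal_bounds hbdd
  obtain ⟨ξ, hξ⟩ := hbdd
  filter_upwards [AEEqFun.coeFn_mk (μ := P) (fun ω => ⨅ n, (φ (X n) ω).toReal) _, hfin, hb,
    ae_all_iff.2 fun n => hξ (X n) (mem_univ _),
    ae_all_iff.2 fun n => ae_all_iff.2 fun m => N.nm_nonneg (X m - X n)] with ω hη hfin hb hξ hnm n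
  have hbddω : BddBelow (range fun n => (φ (X n) ω).toReal) :=
    ⟨ξ ω, by rintro _ ⟨n, rfl⟩; exact EReal.coe_le_coe_iff.1 ((hfin n).symm ▸ hξ n)⟩
  rw [chainInf, hη]
  refine ⟨ciInf_le hbddω n, sub_le_iff_le_add.1 (le_ciInf fun m => ?_)⟩
  rcases le_total n m with h | h
  · linarith [(hb n m h).2]
  · linarith [(hb m n h).1, hnm m n, pow_pos (one_half_pos (α := ℝ)) n]

lemma ae_nm_sub_le (hX : N.IsMinimizingChain φ X) (hbdd : BddBelowOn φ univ) :
    ∀ᵐ ω ∂P, ∀ n m,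
      N.nm (X m - X n) ω ≤ (φ (X n) ω).toReal - chainInf φ X ω + (1 / 2) ^ m := by
  filter_upwards [hX.ae_toReal_bounds hbdd, hX.ae_chainInf_bounds hbdd, hX.ae_nm_sub_le_pow hbdd]
    with ω hb hη hpow n m
  rcases le_total n m with h | h
  · linarith [(hb n m h).1, (hη m).1, pow_pos (one_half_pos (α := ℝ)) m]
  · rw [N.nm_sub_comm]
    linarith [hpow m n h, (hη n).1]

end IsMinimizingChain

lemma monotone_setOf_isConcat_dyadicCover (X : ℕ → E) :
    Monotone fun ε : L0 P => {z | N.IsConcat φ X (dyadicCover ε) z} := fun _ _ h _ hz =>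
  hz.mono <| by filter_upwards [AEEqFun.coeFn_le.2 h] with ω h n hn using le_trans hn h

lemma exists_isConcat_dyadicCover (hCC : N.HasCC univ) (hloc : N.LocalProp φ) (X : ℕ → E)
    {ε : L0 P} (hε : ε ∈ L0pp P) : ∃ z, N.IsConcat φ X (dyadicCover ε) z :=
  exists_isConcat hCC hloc X (fun _ => measurableSet_le measurable_const ε.measurable) <| by
    filter_upwards [hε] with ω hε
    exact (exists_pow_lt_of_lt_one hε one_half_lt_one).imp fun _ => le_of_lt

namespace IsMinimizingChain

variable {X : ℕ → E}

lemma nm_sub_le_of_isConcat (hX : N.IsMinimizingChain φ X) (hbdd : BddBelowOn φ univ)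
    {ε : L0 P} {z z' : E} (hz : N.IsConcat φ X (dyadicCover ε) z)
    (hz' : N.IsConcat φ X (dyadicCover ε) z') : ∀ᵐ ω ∂P, N.nm (z - z') ω ≤ ε ω := by
  filter_upwards [hz z', ae_all_iff.2 fun n => hz' (X n), hX.ae_nm_sub_le_pow hbdd]
    with ω hz hz' hpow
  obtain ⟨n, hn, -, h⟩ := hz
  obtain ⟨m, hm, -, h'⟩ := hz' n
  rw [h, N.nm_sub_comm, h']
  rcases le_total n m with hnm | hnm
  · exact (hpow n m hnm).trans hn
  · rw [N.nm_sub_comm]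
    exact (hpow m n hnm).trans hm

lemma exists_isConcatLimit (hX : N.IsMinimizingChain φ X) (hbdd : BddBelowOn φ univ)
    (hcomp : N.cComplete) (hCC : N.HasCC univ) (hloc : N.LocalProp φ) :
    ∃ u, N.IsConcatLimit φ X u :=
  hcomp.exists_forall_nm_sub_le (monotone_setOf_isConcat_dyadicCover X)
    (fun _ hε => exists_isConcat_dyadicCover hCC hloc X hε)
    fun _ _ _ hz _ hz' => hX.nm_sub_le_of_isConcat hbdd hz hz'

variable {u : E}

lemma phi_le_chainInf (hX : N.IsMinimizingChain φ X) (hbdd : BddBelowOn φ univ)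
    (hCC : N.HasCC univ) (hloc : N.LocalProp φ) (hlsc : N.cLscOn φ univ)
    (hu : N.IsConcatLimit φ X u) : ∀ᵐ ω ∂P, φ u ω ≤ chainInf φ X ω := by
  refine hlsc.ae_le fun ε hε => ?_
  obtain ⟨z, hz⟩ := exists_isConcat_dyadicCover hCC hloc X hε
  refine ⟨z, hu ε hε z hz, ?_⟩
  filter_upwards [hz u, hX.ae_chainInf_bounds hbdd, hX.ae_coe_toReal hbdd] with ω hz hη hfin
  obtain ⟨n, hn, hφ, -⟩ := hz
  rw [hφ, ← hfin n, EReal.coe_le_coe_iff]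
  exact (hη n).2.trans (add_le_add le_rfl hn)

lemma brondstedLE_of_isConcatLimit (hX : N.IsMinimizingChain φ X) (hbdd : BddBelowOn φ univ)
    (hCC : N.HasCC univ) (hloc : N.LocalProp φ) (hlsc : N.cLscOn φ univ)
    (hu : N.IsConcatLimit φ X u) (n : ℕ) : N.BrondstedLE φ u (X n) := by
  have hdist : ∀ᵐ ω ∂P, N.nm (u - X n) ω ≤ (φ (X n) ω).toReal - chainInf φ X ω := by
    refine ae_le_of_forall_ae_le_add_pow fun j => ?_
    have hc := const_mem_L0pp (P := P) (pow_pos one_half_pos (j + 1))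
    obtain ⟨z, hz⟩ := exists_isConcat_dyadicCover hCC hloc X hc
    filter_upwards [hu _ hc z hz, hz (X n), N.nm_add_le (u - z) (z - X n),
      hX.ae_nm_sub_le hbdd, AEEqFun.coeFn_const (μ := P) Ω ((1 / 2 : ℝ) ^ (j + 1))]
      with ω hzu hz htri hnm hc
    obtain ⟨m, hm, -, h⟩ := hz
    rw [sub_add_sub_cancel, N.nm_sub_comm u z, h] at htri
    rw [Function.const_apply] at hc
    rw [dyadicCover, mem_ofPred_eq, hc] at hm
    rw [hc] at hzu
    have := (hnm n m).trans (add_le_add le_rfl hm)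
    rw [pow_succ] at hzu this
    linarith
  filter_upwards [hdist, hX.phi_le_chainInf hbdd hCC hloc hlsc hu, hX.ae_coe_toReal hbdd]
    with ω hdist hφu hfin
  calc φ u ω + (N.nm (u - X n) ω : EReal)
      ≤ (chainInf φ X ω : EReal) + ((φ (X n) ω).toReal - chainInf φ X ω : ℝ) :=
        add_le_add hφu (EReal.coe_le_coe_iff.2 hdist)
    _ = φ (X n) ω := by rw [← EReal.coe_add, add_sub_cancel, hfin]

lemma eq_of_brondstedLE_of_isConcatLimit (hX : N.IsMinimizingChain φ X)
    (hbdd : BddBelowOn φ univ) (hCC : N.HasCC univ) (hloc : N.LocalProp φ)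
    (hlsc : N.cLscOn φ univ) (hu : N.IsConcatLimit φ X u) {y : E}
    (hy : N.BrondstedLE φ y u) : y = u := by
  have hφu := hX.phi_le_chainInf hbdd hCC hloc hlsc hu
  have hyfin := hbdd.ae_coe_toReal (x := y) <| by
    filter_upwards [hy.phi_le, hφu] with ω h h' using h.trans_lt (h'.trans_lt (EReal.coe_lt_top _))
  have hsmall : ∀ᵐ ω ∂P, N.nm (y - u) ω ≤ 0 := ae_le_of_forall_ae_le_add_pow fun n => by
    filter_upwards [hy, hφu, hX.ae_chainInf_bounds hbdd, hX.ae_coe_toReal hbdd, hyfin,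
      hX.isAlmostMinimal n y (hy.trans (hX.brondstedLE_of_isConcatLimit hbdd hCC hloc hlsc hu n))]
      with ω hy hφu hη hfin hyfin hmin
    rw [← hfin n, ← hyfin, ← EReal.coe_add] at hmin
    rw [← hyfin, ← EReal.coe_add] at hy
    have := (EReal.coe_le_coe_iff.1 (hy.trans hφu)).trans
      ((hη n).1.trans (EReal.coe_le_coe_iff.1 hmin))
    linarith
  have hnm : N.nm (y - u) = 0 := AEEqFun.ext <| by
    filter_upwards [hsmall, N.nm_nonneg (y - u), AEEqFun.coeFn_zero (β := ℝ) (μ := P)]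
      with ω h h₀ hzero
    rw [hzero]
    exact le_antisymm h h₀
  exact sub_eq_zero.1 ((N.nm_eq_zero_iff _).1 hnm)

end IsMinimizingChain

lemma exists_brondstedLE_forall_brondstedLE_eq [IsFiniteMeasure P] (hcomp : N.cComplete)
    (hCC : N.HasCC univ) (hloc : N.LocalProp φ) (hlsc : N.cLscOn φ univ)
    (hbdd : BddBelowOn φ univ) {x : E} (hx : ∀ᵐ ω ∂P, φ x ω < ⊤) :
    ∃ u, N.BrondstedLE φ u x ∧ ∀ y, N.BrondstedLE φ y u → y = u := by
  obtain ⟨X, hX, hX0⟩ := exists_isMinimizingChain hCC hloc hbdd hx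
  obtain ⟨u, hu⟩ := hX.exists_isConcatLimit hbdd hcomp hCC hloc
  exact ⟨u, (hX.brondstedLE_of_isConcatLimit hbdd hCC hloc hlsc hu 0).trans hX0,
    fun y hy => hX.eq_of_brondstedLE_of_isConcatLimit hbdd hCC hloc hlsc hu hy⟩

end RNModule

/-- Theorem 3.11: Caristi's fixed point theorem on a `𝒯_c`-complete RN
module with the countable concatenation property, for a proper, `𝒯_c`-lower
semicontinuous, bounded-from-below function with the local property. -/
theorem caristi_Tc
    {Ω : Type*} [MeasurableSpace Ω] {P : Measure Ω} [IsProbabilityMeasure P]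
    {E : Type*} [AddCommGroup E] (N : RNModule P E) (hcomp : N.cComplete)
    (hCCE : N.HasCC Set.univ)
    (φ : E → L0e P)
    (hproper : ProperOn φ Set.univ) (hlsc : N.cLscOn φ Set.univ)
    (hbdd : BddBelowOn φ Set.univ) (hloc : N.LocalProp φ)
    (T : E → E)
    (hT : ∀ u : E, ∀ᵐ ω ∂P, φ (T u) ω + (N.nm (T u - u) ω : EReal) ≤ φ u ω) :
    ∃ u : E, T u = u := by
  obtain ⟨-, x₀, -, hx₀⟩ := hproper
  obtain ⟨u, -, hu⟩ :=
    RNModule.exists_brondstedLE_forall_brondstedLE_eq hcomp hCCE hloc hlsc hbdd hx₀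
  exact ⟨u, hu (T u) (hT u)⟩

end GYY
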